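/- Let q, q' be positive integers, n₁ a common divisor of q and q' with n₁² | qq', and m, m', n₂ integers with gcd(m,q) = gcd(m',q') = 1. Define the character sum C = Σ_{γ mod qq'/n₁²} S(m̄, γ; q/n₁) · S(m̄', γ; q'/n₁) · e(n₂γ/(qq'/n₁²)). Then |C| ≤ (qq'/n₁²) · gcd(q/n₁, q'/n₁, n₂). -/

import Mathlib

/-!
Put `a = q/n₁`, `b = q'/n₁`. Writing every phase as a value of the standard additive
character of `ZMod (a * b)`, the product of the two Kloosterman sums becomes a double sum over
reduced residues `x mod a`, `y mod b` of unimodular terms times `e(γ (b x̄ + a ȳ + n₂) / ab)`.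
Summing over `γ` first, orthogonality leaves `ab` times a sum of unimodular terms over the pairs
with `b x̄ + a ȳ + n₂ ≡ 0 mod ab`. Such a pair is determined by `x̄ mod a`, a solution of the linear
congruence `b t + n₂ ≡ 0 mod a`, and this congruence has at most `gcd(a, b, n₂)` solutions.
-/

open scoped BigOperators

/-- `e t = exp(2πit)`. -/
noncomputable def eAdd (t : ℝ) : ℂ := Complex.exp (2 * Real.pi * Complex.I * t)

/-- Kloosterman sum `S(a,b;c) = Σ*_{x mod c} e((ax + b x̄)/c)`. -/
noncomputable def kloosterman (q : ℕ) (a b : ZMod q) : ℂ :=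
  ∑ x ∈ Finset.filter (fun x => Nat.Coprime x q) (Finset.range q),
    eAdd ((((a * (x : ZMod q) + b * ((x : ZMod q))⁻¹).val : ℕ) : ℝ) / q)

open Finset ZMod

lemma eAdd_val_div_eq_stdAddChar {N : ℕ} [NeZero N] (j : ZMod N) :
    eAdd ((j.val : ℝ) / N) = stdAddChar j := by
  rw [stdAddChar_apply, toCircle_apply, eAdd]
  push_cast
  ring_nf

lemma norm_stdAddChar {N : ℕ} [NeZero N] (j : ZMod N) : ‖stdAddChar j‖ = 1 :=
  Circle.norm_coe _

lemma stdAddChar_natCast_eq {a b N : ℕ} [NeZero a] [NeZero N] (hN : a * b = N) (k : ℕ) :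
    stdAddChar (k : ZMod a) = stdAddChar ((b * k : ℕ) : ZMod N) := by
  have hb : (b : ℂ) ≠ 0 := by exact_mod_cast right_ne_zero_of_mul (hN ▸ NeZero.ne N)
  simp only [stdAddChar_apply, toCircle_natCast, ← hN]
  push_cast
  congr 1
  field_simp

lemma stdAddChar_natCast_mul_eq {a b N : ℕ} [NeZero a] [NeZero N] (hN : a * b = N) (γ : ℕ)
    (t : ZMod a) :
    stdAddChar ((γ : ZMod a) * t) = stdAddChar ((γ : ZMod N) * (b * t.val : ZMod N)) := by
  conv_lhs => rw [← natCast_zmod_val t, ← Nat.cast_mul, stdAddChar_natCast_eq hN]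
  push_cast
  ring_nf

lemma sum_range_natCast_eq_sum_univ {M : Type*} [AddCommMonoid M] (N : ℕ) [NeZero N]
    (f : ZMod N → M) : ∑ γ ∈ range N, f γ = ∑ g, f g :=
  sum_nbij' (↑) val (by simp) (by simp [val_lt])
    (fun _ hγ => val_cast_of_lt (mem_range.1 hγ)) (fun g _ => natCast_zmod_val g) (fun _ _ => rfl)

lemma sum_range_stdAddChar_mul (N : ℕ) [NeZero N] (c : ZMod N) :
    ∑ γ ∈ range N, stdAddChar ((γ : ZMod N) * c) = if c = 0 then (N : ℂ) else 0 := by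
  rw [sum_range_natCast_eq_sum_univ N (fun g => stdAddChar (g * c)),
    AddChar.sum_mulShift c (isPrimitive_stdAddChar N), ZMod.card, Nat.cast_ite, Nat.cast_zero]

def reducedResidues (N : ℕ) : Finset ℕ := {x ∈ range N | x.Coprime N}

lemma eq_of_natCast_inv_eq {N x x' : ℕ} (hx : x ∈ reducedResidues N)
    (hx' : x' ∈ reducedResidues N) (h : (x : ZMod N)⁻¹ = (x' : ZMod N)⁻¹) : x = x' := by
  simp only [reducedResidues, mem_filter, mem_range] at hx hx'
  have hinv : (x : ZMod N) = x' :=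
    left_inv_eq_right_inv (coe_mul_inv_eq_one x hx.2)
      (by rw [h, mul_comm, coe_mul_inv_eq_one x' hx'.2])
  rwa [natCast_eq_natCast_iff', Nat.mod_eq_of_lt hx.1, Nat.mod_eq_of_lt hx'.1] at hinv

lemma kloosterman_eq_sum_stdAddChar (N : ℕ) [NeZero N] (a b : ZMod N) :
    kloosterman N a b =
      ∑ x ∈ reducedResidues N, stdAddChar (a * (x : ZMod N) + b * (x : ZMod N)⁻¹) := by
  simp only [kloosterman, reducedResidues, eAdd_val_div_eq_stdAddChar]

/-- `b x̄ + a ȳ mod ab`, where `x̄` is the inverse of `x` mod `a` and `ȳ` that of `y` mod `b`. -/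
def invCombination (a b x y : ℕ) : ZMod (a * b) :=
  b * ((x : ZMod a)⁻¹.val : ZMod (a * b)) + a * ((y : ZMod b)⁻¹.val : ZMod (a * b))

section

variable {a b : ℕ} [NeZero a] [NeZero b]

lemma kloosterman_mul_kloosterman_mul_stdAddChar (u : ZMod a) (u' : ZMod b) (c : ZMod (a * b))
    (γ : ℕ) :
    kloosterman a u γ * kloosterman b u' γ * stdAddChar (c * (γ : ZMod (a * b))) =
      ∑ x ∈ reducedResidues a, ∑ y ∈ reducedResidues b,
        stdAddChar (u * (x : ZMod a)) * stdAddChar (u' * (y : ZMod b)) *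
          stdAddChar ((γ : ZMod (a * b)) * (invCombination a b x y + c)) := by
  rw [kloosterman_eq_sum_stdAddChar, kloosterman_eq_sum_stdAddChar, sum_mul_sum, sum_mul]
  refine sum_congr rfl fun x _ => ?_
  rw [sum_mul]
  refine sum_congr rfl fun y _ => ?_
  rw [mul_comm c, AddChar.map_add_eq_mul, AddChar.map_add_eq_mul,
    stdAddChar_natCast_mul_eq (b := b) rfl γ, stdAddChar_natCast_mul_eq (mul_comm b a) γ,
    invCombination, mul_add, mul_add, AddChar.map_add_eq_mul, AddChar.map_add_eq_mul]
  ring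

lemma sum_kloosterman_mul_kloosterman_mul_stdAddChar (u : ZMod a) (u' : ZMod b)
    (c : ZMod (a * b)) :
    ∑ γ ∈ range (a * b),
        kloosterman a u γ * kloosterman b u' γ * stdAddChar (c * (γ : ZMod (a * b))) =
      ∑ x ∈ reducedResidues a, ∑ y ∈ reducedResidues b,
        stdAddChar (u * (x : ZMod a)) * stdAddChar (u' * (y : ZMod b)) *
          if invCombination a b x y + c = 0 then ((a * b : ℕ) : ℂ) else 0 := by
  simp_rw [kloosterman_mul_kloosterman_mul_stdAddChar]
  rw [sum_comm]
  refine sum_congr rfl fun x _ => ?_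
  rw [sum_comm]
  refine sum_congr rfl fun y _ => ?_
  rw [← mul_sum, sum_range_stdAddChar_mul]

lemma norm_sum_kloosterman_mul_kloosterman_mul_stdAddChar_le (u : ZMod a) (u' : ZMod b)
    (c : ZMod (a * b)) :
    ‖∑ γ ∈ range (a * b),
        kloosterman a u γ * kloosterman b u' γ * stdAddChar (c * (γ : ZMod (a * b)))‖ ≤
      (a * b : ℕ) *
        #{z ∈ reducedResidues a ×ˢ reducedResidues b | invCombination a b z.1 z.2 + c = 0} := by
  rw [sum_kloosterman_mul_kloosterman_mul_stdAddChar, ← sum_product']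
  calc _ ≤ ∑ z ∈ reducedResidues a ×ˢ reducedResidues b,
        if invCombination a b z.1 z.2 + c = 0 then ((a * b : ℕ) : ℝ) else 0 := by
        refine (norm_sum_le _ _).trans_eq (sum_congr rfl fun z _ => ?_)
        rw [norm_mul, norm_mul, norm_stdAddChar, norm_stdAddChar, one_mul, one_mul,
          apply_ite norm, norm_zero, Complex.norm_natCast]
    _ = _ := by rw [← sum_filter, sum_const, nsmul_eq_mul, mul_comm]

end

lemma natCast_gcd_eq_mul_gcdB (a b : ℕ) :
    ((a.gcd b : ℕ) : ZMod a) = b * (a.gcdB b : ZMod a) := by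
  have := congrArg (Int.cast : ℤ → ZMod a) (Nat.gcd_eq_gcd_ab a b)
  push_cast at this
  rwa [natCast_self, zero_mul, zero_add] at this

lemma card_filter_mul_add_eq_zero_le (a b : ℕ) [NeZero a] (c : ℤ) :
    #{t : ZMod a | (b : ZMod a) * t + c = 0} ≤ Int.gcd (a.gcd b) c := by
  rcases eq_empty_or_nonempty {t : ZMod a | (b : ZMod a) * t + c = 0} with h | ⟨t₀, ht₀⟩
  · simp [h]
  rw [mem_filter] at ht₀
  have hdvd : ((a.gcd b : ℕ) : ℤ) ∣ c := by
    have := congrArg (castHom (Nat.gcd_dvd_left a b) (ZMod (a.gcd b))) ht₀.2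
    rw [map_add, map_mul, map_natCast, map_intCast, map_zero,
      (natCast_eq_zero_iff b _).2 (Nat.gcd_dvd_right a b), zero_mul, zero_add] at this
    exact (intCast_zmod_eq_zero_iff_dvd c _).1 this
  rw [Int.gcd_eq_natAbs_left hdvd, Int.natAbs_natCast]
  -- the solutions form a coset of the kernel of multiplication by `b`, killed by `gcd a b`
  calc _ ≤ #{s : ZMod a | a.gcd b • s = 0} := by
        refine card_le_card_of_injOn (· - t₀) (fun t ht => ?_) sub_left_injective.injOn
        simp only [coe_filter, Set.mem_ofPred_eq, mem_univ, true_and] at ht ⊢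
        rw [nsmul_eq_mul, natCast_gcd_eq_mul_gcdB, mul_right_comm, mul_sub]
        linear_combination (a.gcdB b : ZMod a) * (ht - ht₀.2)
    _ ≤ a.gcd b := IsAddCyclic.card_nsmul_eq_zero_le (Nat.gcd_pos_of_pos_left b (NeZero.pos a))

lemma natCast_eq_natCast_of_mul_eq {a b k k' : ℕ} [NeZero a]
    (h : (a * k : ZMod (a * b)) = a * k') : (k : ZMod b) = k' := by
  rw [← Nat.cast_mul, ← Nat.cast_mul, natCast_eq_natCast_iff] at h
  exact (natCast_eq_natCast_iff _ _ _).2 (Nat.ModEq.mul_left_cancel' (NeZero.ne a) h)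

lemma card_filter_invCombination_add_eq_zero_le (a b : ℕ) [NeZero a] [NeZero b] (c : ℤ) :
    #{z ∈ reducedResidues a ×ˢ reducedResidues b | invCombination a b z.1 z.2 + c = 0} ≤
      Int.gcd (a.gcd b) c := by
  refine le_trans (card_le_card_of_injOn (fun z => (z.1 : ZMod a)⁻¹) (fun z hz => ?_)
    (fun z hz z' hz' hzz' => ?_)) (card_filter_mul_add_eq_zero_le a b c)
  · simp only [coe_filter, Set.mem_ofPred_eq, mem_product] at hz
    simpa [invCombination, -natCast_val, natCast_zmod_val] using
      congrArg (castHom (dvd_mul_right a b) (ZMod a)) hz.2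
  · simp only [coe_filter, Set.mem_ofPred_eq, mem_product] at hz hz'
    have hx : z.1 = z'.1 := eq_of_natCast_inv_eq hz.1.1 hz'.1.1 hzz'
    have hy : (a * ((z.2 : ZMod b)⁻¹.val : ℕ) : ZMod (a * b)) =
        a * ((z'.2 : ZMod b)⁻¹.val : ℕ) := by
      have := hz.2.trans hz'.2.symm
      rw [invCombination, invCombination, hx] at this
      linear_combination this
    have hinv := natCast_eq_natCast_of_mul_eq hy
    rw [natCast_zmod_val, natCast_zmod_val] at hinv
    exact Prod.ext hx (eq_of_natCast_inv_eq hz.1.2 hz'.1.2 hinv)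

theorem character_sum_bound_general
    (q q' n₁ : ℕ) (hq : 0 < q) (hq' : 0 < q')
    (hn₁ : n₁ ∣ q) (hn₁' : n₁ ∣ q')
    (m m' n₂ : ℤ)
    (C : ℂ)
    (hC : C = ∑ γ ∈ Finset.range (q * q' / n₁ ^ 2),
      kloosterman (q / n₁) ((m : ZMod (q / n₁)))⁻¹ (γ : ZMod (q / n₁))
      * kloosterman (q' / n₁) ((m' : ZMod (q' / n₁)))⁻¹ (γ : ZMod (q' / n₁))
      * eAdd (((((n₂ : ZMod (q * q' / n₁ ^ 2)) * (γ : ZMod (q * q' / n₁ ^ 2))).val : ℕ) : ℝ)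
          / (q * q' / n₁ ^ 2))) :
    ‖C‖ ≤ (q * q' / n₁ ^ 2 : ℕ) * (Int.gcd (Int.gcd ((q / n₁ : ℕ) : ℤ) ((q' / n₁ : ℕ) : ℤ)) n₂) := by
  have hn₁0 : 0 < n₁ := Nat.pos_of_dvd_of_pos hn₁ hq
  have : NeZero (q / n₁) := ⟨(Nat.div_pos (Nat.le_of_dvd hq hn₁) hn₁0).ne'⟩
  have : NeZero (q' / n₁) := ⟨(Nat.div_pos (Nat.le_of_dvd hq' hn₁') hn₁0).ne'⟩
  have hQ : q * q' / n₁ ^ 2 = q / n₁ * (q' / n₁) := by rw [sq, Nat.div_mul_div_comm hn₁ hn₁']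
  have hQℝ : (q * q' / n₁ ^ 2 : ℝ) = ((q / n₁ * (q' / n₁) : ℕ) : ℝ) := by
    rw [← hQ, Nat.cast_div (sq n₁ ▸ mul_dvd_mul hn₁ hn₁') (by positivity), Nat.cast_mul,
      Nat.cast_pow]
  subst hC
  rw [hQℝ, hQ, Int.gcd_natCast_natCast]
  simp only [eAdd_val_div_eq_stdAddChar]
  refine (norm_sum_kloosterman_mul_kloosterman_mul_stdAddChar_le _ _ _).trans ?_
  gcongr
  exact card_filter_invCombination_add_eq_zero_le _ _ n₂

theorem character_sum_bound
    (q q' n₁ : ℕ) (hq : 0 < q) (hq' : 0 < q')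
    (hn₁ : n₁ ∣ q) (hn₁' : n₁ ∣ q') (hn₁sq : n₁ ^ 2 ∣ q * q')
    (m m' n₂ : ℤ)
    (hm : Int.gcd m q = 1) (hm' : Int.gcd m' q' = 1)
    (C : ℂ)
    (hC : C = ∑ γ ∈ Finset.range (q * q' / n₁ ^ 2),
      kloosterman (q / n₁) ((m : ZMod (q / n₁)))⁻¹ (γ : ZMod (q / n₁))
      * kloosterman (q' / n₁) ((m' : ZMod (q' / n₁)))⁻¹ (γ : ZMod (q' / n₁))
      * eAdd (((((n₂ : ZMod (q * q' / n₁ ^ 2)) * (γ : ZMod (q * q' / n₁ ^ 2))).val : ℕ) : ℝ)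
          / (q * q' / n₁ ^ 2))) :
    ‖C‖ ≤ (q * q' / n₁ ^ 2 : ℕ) * (Int.gcd (Int.gcd ((q / n₁ : ℕ) : ℤ) ((q' / n₁ : ℕ) : ℤ)) n₂) :=
  character_sum_bound_general q q' n₁ hq hq' hn₁ hn₁' m m' n₂ C hC
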